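/- arXiv:1306.1629 — 2 statements merged into one kernel-verified Lean document; each statement's English description precedes it below -/
import Mathlib

section
/- For two r-dimensional subspaces of ℝⁿ spanned by orthonormal bases {a₁,…,a_r} and {b₁,…,b_r} that are in biorthogonal (principal vector) position—meaning ⟪a_k, b_l⟫ = 0 and ⟪a_k, a_l⟫ = ⟪b_k, b_l⟫ = δ_{kl} for k ≠ l—the scalar part of the Clifford algebra product (a₁⋯a_r)·(b_r⋯b₁) equals the product ∏_k ⟪a_k, b_k⟫ of the cosines of the principal angles. -/
/-!
Induct on `r`, peeling off the innermost pair `a_r b_r` in front of a tail `L` of vectors orthogonal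
to all `a_k, b_k`. Writing `b_r = c a_r + u` with `c = ⟪a_r, b_r⟫` and `u ⟂ a_r` gives
`a_r b_r = c + a_r u`. The bivector `a_r u` commutes with the remaining `b_k` (each of its factors
anticommutes with them), so it joins the tail. The first term contributes the factor `c`; the
second has the tail `a_r u L`, whose scalar part vanishes because `Sc (v x) = Sc (⟪v, ·⟫ ⌋ x)`
and the contraction of a product of vectors orthogonal to `v` is zero.
-/

/-- The scalar (grade-0) part of an element of a Clifford algebra, obtained via the
canonical linear isomorphism with the exterior algebra. -/
noncomputable def scalarPart {V : Type*} [AddCommGroup V] [Module ℝ V]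
    (Q : QuadraticForm ℝ V) : CliffordAlgebra Q →ₗ[ℝ] ℝ :=
  (ExteriorAlgebra.algebraMapInv (R := ℝ) (M := V)).toLinearMap ∘ₗ
    (CliffordAlgebra.equivExterior Q).toLinearMap

open CliffordAlgebra QuadraticMap

section CommRing

variable {R M : Type*} [CommRing R] [AddCommGroup M] [Module R M] {Q : QuadraticForm R M}

theorem CliffordAlgebra.contractLeft_prod_map_ι_eq_zero (d : Module.Dual R M) (L : List M)
    (hL : ∀ v ∈ L, d v = 0) : contractLeft d (L.map (ι Q)).prod = 0 := by
  induction L with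
  | nil => rw [List.map_nil, List.prod_nil, contractLeft_one]
  | cons v L ih =>
    rw [List.map_cons, List.prod_cons, contractLeft_ι_mul, hL v List.mem_cons_self,
      ih fun w hw => hL w (List.mem_cons_of_mem v hw), zero_smul, mul_zero, sub_zero]

theorem CliffordAlgebra.commute_ι_mul_ι_prod_map_ι {u w : M} (L : List M)
    (hL : ∀ v ∈ L, Q.IsOrtho u v ∧ Q.IsOrtho w v) :
    Commute (ι Q u * ι Q w) (L.map (ι Q)).prod := by
  refine Commute.list_prod_right _ _ fun x hx => ?_
  obtain ⟨v, hv, rfl⟩ := List.mem_map.1 hx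
  calc ι Q u * ι Q w * ι Q v = ι Q u * -(ι Q v * ι Q w) := by
        rw [mul_assoc, ι_mul_ι_comm_of_isOrtho (hL v hv).2]
    _ = ι Q v * (ι Q u * ι Q w) := by
        rw [mul_neg, ← mul_assoc, ι_mul_ι_comm_of_isOrtho (hL v hv).1, neg_mul, neg_neg,
          mul_assoc]

theorem QuadraticMap.IsOrtho.sub_smul {x y z : M} (hy : Q.IsOrtho x y) (hz : Q.IsOrtho x z)
    (c : R) : Q.IsOrtho x (y - c • z) := by
  rw [← isOrtho_polarBilin] at hy hz ⊢
  rw [map_sub, map_smul, hy, hz, smul_zero, sub_zero]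

variable [Invertible (2 : R)]

theorem QuadraticMap.isOrtho_sub_associated_smul {a : M} (ha : Q a = 1) (b : M) :
    Q.IsOrtho a (b - Q.associated a b • a) := by
  rw [← associated_isOrtho, map_sub, map_smul, associated_eq_self_apply, ha, smul_eq_mul,
    mul_one, sub_self]

theorem CliffordAlgebra.ι_mul_ι_eq_algebraMap_add {a : M} (ha : Q a = 1) (b : M) :
    ι Q a * ι Q b =
      algebraMap R _ (Q.associated a b) + ι Q a * ι Q (b - Q.associated a b • a) := by
  rw [map_sub, mul_sub, map_smul, mul_smul_comm, ι_sq_scalar, ha, map_one,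
    Algebra.algebraMap_eq_smul_one, add_sub_cancel]

theorem CliffordAlgebra.mul_ι_mul_ι_mul_eq_smul_add {a : M} (ha : Q a = 1) (b : M)
    (A B X : CliffordAlgebra Q) (hB : Commute (ι Q a * ι Q (b - Q.associated a b • a)) B) :
    A * ι Q a * (ι Q b * B) * X =
      Q.associated a b • (A * B * X) +
        A * B * (ι Q a * (ι Q (b - Q.associated a b • a) * X)) := by
  calc A * ι Q a * (ι Q b * B) * X = A * (ι Q a * ι Q b) * B * X := by simp only [mul_assoc]
    _ = Q.associated a b • (A * B * X) +
          A * (ι Q a * ι Q (b - Q.associated a b • a)) * B * X := by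
        rw [ι_mul_ι_eq_algebraMap_add ha, mul_add, add_mul, add_mul,
          Algebra.algebraMap_eq_smul_one, mul_smul_comm, mul_one, smul_mul_assoc, smul_mul_assoc]
    _ = _ := by rw [mul_assoc A (ι Q a * _), hB.eq]; simp only [mul_assoc]

end CommRing

section Real

variable {V : Type*} [AddCommGroup V] [Module ℝ V] {Q : QuadraticForm ℝ V}

theorem scalarPart_one : scalarPart Q 1 = 1 := by
  simp [scalarPart]

theorem scalarPart_ι_mul (u : V) (x : CliffordAlgebra Q) :
    scalarPart Q (ι Q u * x) = scalarPart Q (contractLeft (Q.associated u) x) := by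
  simp only [scalarPart, LinearMap.coe_comp, Function.comp_apply, AlgHom.toLinearMap_apply,
    LinearEquiv.coe_coe, equivExterior, changeFormEquiv_apply]
  rw [changeForm_ι_mul, map_sub, map_mul, ← changeForm_contractLeft]
  simp [ExteriorAlgebra.algebraMapInv]

theorem scalarPart_ι_mul_prod_map_ι_eq_zero {u : V} (L : List V)
    (hL : ∀ v ∈ L, Q.IsOrtho u v) : scalarPart Q (ι Q u * (L.map (ι Q)).prod) = 0 := by
  rw [scalarPart_ι_mul,
    contractLeft_prod_map_ι_eq_zero _ L fun v hv => associated_isOrtho.2 (hL v hv), map_zero]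

theorem scalarPart_prod_mul_prod_reverse_mul {r : ℕ} (a b : Fin r → V)
    (horth : ∀ k l : Fin r, k ≠ l →
      Q.IsOrtho (a k) (a l) ∧ Q.IsOrtho (a k) (b l) ∧ Q.IsOrtho (b k) (b l))
    (ha : ∀ k, Q (a k) = 1) (L : List V)
    (hL : ∀ k, ∀ v ∈ L, Q.IsOrtho (a k) v ∧ Q.IsOrtho (b k) v) :
    scalarPart Q ((List.ofFn fun k => ι Q (a k)).prod *
        (List.ofFn fun k => ι Q (b k)).reverse.prod * (L.map (ι Q)).prod) =
      (∏ k, Q.associated (a k) (b k)) * scalarPart Q (L.map (ι Q)).prod := by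
  induction r generalizing L with
  | zero => simp
  | succ r ih =>
    set a' := fun k : Fin r => a k.castSucc
    set b' := fun k : Fin r => b k.castSucc
    set aₗ := a (Fin.last r)
    set c := Q.associated aₗ (b (Fin.last r))
    set u := b (Fin.last r) - c • aₗ
    have horth' : ∀ k l : Fin r, k ≠ l →
        Q.IsOrtho (a' k) (a' l) ∧ Q.IsOrtho (a' k) (b' l) ∧ Q.IsOrtho (b' k) (b' l) :=
      fun k l hkl => horth _ _ (Fin.castSucc_injective r |>.ne hkl)
    have hlast : ∀ k : Fin r, Fin.castSucc k ≠ Fin.last r := Fin.castSucc_ne_last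
    have haₗ : ∀ k : Fin r, Q.IsOrtho (a' k) aₗ ∧ Q.IsOrtho (b' k) aₗ := fun k =>
      ⟨(horth _ _ (hlast k)).1, ((horth _ _ (hlast k).symm).2.1).symm⟩
    have hu : ∀ k : Fin r, Q.IsOrtho (a' k) u ∧ Q.IsOrtho (b' k) u := fun k =>
      ⟨(horth _ _ (hlast k)).2.1.sub_smul (haₗ k).1 c,
        (horth _ _ (hlast k)).2.2.sub_smul (haₗ k).2 c⟩
    have hL' : ∀ k : Fin r, ∀ v ∈ aₗ :: u :: L,
        Q.IsOrtho (a' k) v ∧ Q.IsOrtho (b' k) v := by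
      intro k v hv
      rcases List.mem_cons.1 hv with rfl | hv
      · exact haₗ k
      rcases List.mem_cons.1 hv with rfl | hv
      · exact hu k
      · exact hL _ v hv
    set A := (List.ofFn fun k => ι Q (a' k)).prod
    set B := (List.ofFn fun k => ι Q (b' k)).reverse.prod
    have hcomm : Commute (ι Q aₗ * ι Q u) B := by
      have := commute_ι_mul_ι_prod_map_ι (Q := Q) (u := aₗ) (w := u) (List.ofFn b').reverse
        fun v hv => by
          obtain ⟨k, rfl⟩ := List.mem_ofFn.1 (List.mem_reverse.1 hv)
          exact ⟨(horth _ _ (hlast k).symm).2.1, (hu k).2.symm⟩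
      simpa only [List.map_reverse, List.map_ofFn, Function.comp_def] using this
    have hsplit : (List.ofFn fun k => ι Q (a k)).prod *
        (List.ofFn fun k => ι Q (b k)).reverse.prod * (L.map (ι Q)).prod =
        c • (A * B * (L.map (ι Q)).prod) + A * B * ((aₗ :: u :: L).map (ι Q)).prod := by
      rw [List.ofFn_succ', List.prod_concat, List.ofFn_succ' (fun k => ι Q (b k)),
        List.concat_eq_append, List.reverse_concat, List.prod_cons,
        mul_ι_mul_ι_mul_eq_smul_add (ha _) _ _ _ _ hcomm, List.map_cons, List.map_cons,
        List.prod_cons, List.prod_cons]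
    have htail : ∀ v ∈ u :: L, Q.IsOrtho aₗ v := by
      intro v hv
      rcases List.mem_cons.1 hv with rfl | hv
      · exact isOrtho_sub_associated_smul (ha _) _
      · exact (hL _ v hv).1
    rw [hsplit, map_add, map_smul, ih a' b' horth' (fun k => ha _) L fun k => hL _,
      ih a' b' horth' (fun k => ha _) _ hL', List.map_cons, List.prod_cons,
      scalarPart_ι_mul_prod_map_ι_eq_zero _ htail, Fin.prod_univ_castSucc, smul_eq_mul]
    ring

end Real

theorem QuadraticMap.associated_eq_inner {F : Type*} [NormedAddCommGroup F]
    [InnerProductSpace ℝ F] {Q : QuadraticForm ℝ F} (hQ : ∀ v, Q v = ‖v‖ ^ 2) (x y : F) :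
    Q.associated x y = inner ℝ x y := by
  rw [associated_apply, hQ, hQ, hQ, norm_add_sq_real]
  simp only [Module.End.smul_def, half_moduleEnd_apply_eq_half_smul, invOf_eq_inv, smul_eq_mul]
  ring

theorem stmt17 (n : ℕ) (Q : QuadraticForm ℝ (EuclideanSpace ℝ (Fin n)))
    (hQ : ∀ v : EuclideanSpace ℝ (Fin n), Q v = ‖v‖ ^ 2)
    (r : ℕ) (a b : Fin r → EuclideanSpace ℝ (Fin n))
    (horth : ∀ k l : Fin r, k ≠ l →
      (inner ℝ (a k) (a l) : ℝ) = 0 ∧ (inner ℝ (a k) (b l) : ℝ) = 0 ∧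
        (inner ℝ (b k) (b l) : ℝ) = 0)
    (hunit : ∀ k : Fin r, ‖a k‖ = 1 ∧ ‖b k‖ = 1) :
    scalarPart Q
        ((List.ofFn fun k => CliffordAlgebra.ι Q (a k)).prod *
          (List.ofFn fun k => CliffordAlgebra.ι Q (b k)).reverse.prod) =
      ∏ k : Fin r, (inner ℝ (a k) (b k) : ℝ) := by
  have hB := associated_eq_inner hQ
  have hortho : ∀ x y, Q.IsOrtho x y ↔ inner ℝ x y = 0 := fun x y => by
    rw [← associated_isOrtho, hB]
  simpa [hB, scalarPart_one] using scalarPart_prod_mul_prod_reverse_mul (Q := Q) a b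
    (fun k l hkl => by simpa only [hortho] using horth k l hkl)
    (fun k => by rw [hQ, (hunit k).1, one_pow]) [] (by simp)
end

section
/- If two r-dimensional subspaces A, B of a Euclidean space have a pair of principal vectors that are orthogonal (some principal angle equals π/2), then the scalar part of A·reverse(B) is zero, where A and B are the blades (products of the respective orthonormal principal bases) representing the subspaces. -/
/-!
The vector `v = a j` is orthogonal to every other factor of `A * reverse B`, so the product has
the form `x * ι v * y` with `x, y` in the subalgebra generated by `v`-orthogonal vectors. Moving
`ι v` to the front only applies the grade involution to `x`. Under the linear isomorphism with
the exterior algebra, `ι v * z` goes to `v ∧ z'` for such `z`, because the correction term is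
a contraction by the polar form at `v`, which kills that subalgebra; and `v ∧ z'` has no scalar
part.
-/

open CliffordAlgebra

theorem exists_prod_ofFn_eq_mul_mul {M σ : Type*} [Monoid M] [SetLike σ M] [SubmonoidClass σ M]
    {S : σ} {n : ℕ} (f : Fin n → M) (j : Fin n) (hf : ∀ i, i ≠ j → f i ∈ S) :
    ∃ x ∈ S, ∃ y ∈ S, (List.ofFn f).prod = x * f j * y := by
  have hj : (j : ℕ) < (List.ofFn f).length := by simp
  refine ⟨((List.ofFn f).take j).prod, list_prod_mem fun z hz => ?_,
    ((List.ofFn f).drop (j + 1)).prod, list_prod_mem fun z hz => ?_, ?_⟩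
  · obtain ⟨k, hk, rfl⟩ := List.mem_take_iff_getElem.mp hz
    rw [List.getElem_ofFn]
    exact hf _ fun h => by simp [Fin.ext_iff] at h; omega
  · obtain ⟨k, hk, rfl⟩ := List.mem_drop_iff_getElem.mp hz
    rw [List.getElem_ofFn]
    exact hf _ fun h => by simp [Fin.ext_iff] at h; omega
  · conv_lhs => rw [← List.take_append_drop j (List.ofFn f), List.drop_eq_getElem_cons hj]
    simp [mul_assoc]

namespace CliffordAlgebra

variable {R M : Type*} [CommRing R] [AddCommGroup M] [Module R M] {Q : QuadraticForm R M}
  {s : Set M}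

theorem involute_mem_adjoin_ι {x : CliffordAlgebra Q} (hx : x ∈ Algebra.adjoin R (ι Q '' s)) :
    involute x ∈ Algebra.adjoin R (ι Q '' s) := by
  induction hx using Algebra.adjoin_induction with
  | mem x hx =>
    obtain ⟨w, hw, rfl⟩ := hx
    rw [involute_ι]
    exact neg_mem (Algebra.subset_adjoin ⟨w, hw, rfl⟩)
  | algebraMap r => rw [AlgHom.commutes]; exact Subalgebra.algebraMap_mem _ r
  | add x y _ _ hx hy => rw [map_add]; exact add_mem hx hy
  | mul x y _ _ hx hy => rw [map_mul]; exact mul_mem hx hy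

theorem mul_ι_of_mem_adjoin_ι {v : M} (hv : ∀ w ∈ s, Q.IsOrtho v w) {x : CliffordAlgebra Q}
    (hx : x ∈ Algebra.adjoin R (ι Q '' s)) : x * ι Q v = ι Q v * involute x := by
  induction hx using Algebra.adjoin_induction with
  | mem x hx =>
    obtain ⟨w, hw, rfl⟩ := hx
    rw [involute_ι, mul_neg, ← ι_mul_ι_comm_of_isOrtho (hv w hw).symm]
  | algebraMap r => simp [Algebra.commutes]
  | add x y _ _ hx hy => simp [add_mul, mul_add, hx, hy]
  | mul x y _ _ hx hy => rw [mul_assoc, hy, ← mul_assoc, hx, mul_assoc, map_mul]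

theorem contractLeft_mul_of_mem_adjoin_ι {d : Module.Dual R M} (hd : ∀ w ∈ s, d w = 0)
    {x : CliffordAlgebra Q} (hx : x ∈ Algebra.adjoin R (ι Q '' s)) (y : CliffordAlgebra Q) :
    contractLeft d (x * y) = involute x * contractLeft d y := by
  induction hx using Algebra.adjoin_induction generalizing y with
  | mem x hx =>
    obtain ⟨w, hw, rfl⟩ := hx
    rw [contractLeft_ι_mul, hd w hw, zero_smul, zero_sub, involute_ι, neg_mul]
  | algebraMap r => simp [contractLeft_algebraMap_mul]
  | add x y _ _ hx hy => simp [add_mul, hx, hy]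
  | mul x y _ _ hx hy => rw [mul_assoc, hx, hy, map_mul, mul_assoc]

theorem contractLeft_eq_zero_of_mem_adjoin_ι {d : Module.Dual R M} (hd : ∀ w ∈ s, d w = 0)
    {x : CliffordAlgebra Q} (hx : x ∈ Algebra.adjoin R (ι Q '' s)) : contractLeft d x = 0 := by
  simpa using contractLeft_mul_of_mem_adjoin_ι hd hx 1

theorem equivExterior_ι_mul [Invertible (2 : R)] {v : M} (hv : ∀ w ∈ s, Q.IsOrtho v w)
    {x : CliffordAlgebra Q} (hx : x ∈ Algebra.adjoin R (ι Q '' s)) :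
    equivExterior Q (ι Q v * x) = ExteriorAlgebra.ι R v * equivExterior Q x := by
  have hd : ∀ w ∈ s, QuadraticMap.associated (-Q) v w = 0 := fun w hw => by
    simpa using hv w hw
  simp only [equivExterior, changeFormEquiv_apply, changeForm_ι_mul, ← changeForm_contractLeft,
    contractLeft_eq_zero_of_mem_adjoin_ι hd hx, map_zero, sub_zero]

end CliffordAlgebra

section ScalarPart

variable {V : Type*} [AddCommGroup V] [Module ℝ V] {Q : QuadraticForm ℝ V} {s : Set V}

theorem scalarPart_ι_mul_s18 {v : V} (hv : ∀ w ∈ s, Q.IsOrtho v w) {x : CliffordAlgebra Q}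
    (hx : x ∈ Algebra.adjoin ℝ (ι Q '' s)) : scalarPart Q (ι Q v * x) = 0 := by
  change ExteriorAlgebra.algebraMapInv (equivExterior Q (ι Q v * x)) = 0
  rw [equivExterior_ι_mul hv hx, map_mul, ExteriorAlgebra.algebraMapInv,
    ExteriorAlgebra.lift_ι_apply, LinearMap.zero_apply, zero_mul]

theorem scalarPart_mul_ι_mul {v : V} (hv : ∀ w ∈ s, Q.IsOrtho v w) {x y : CliffordAlgebra Q}
    (hx : x ∈ Algebra.adjoin ℝ (ι Q '' s)) (hy : y ∈ Algebra.adjoin ℝ (ι Q '' s)) :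
    scalarPart Q (x * ι Q v * y) = 0 := by
  rw [mul_ι_of_mem_adjoin_ι hv hx, mul_assoc]
  exact scalarPart_ι_mul_s18 hv (mul_mem (involute_mem_adjoin_ι hx) hy)

end ScalarPart

theorem QuadraticMap.isOrtho_of_inner_eq_zero {E : Type*} [NormedAddCommGroup E]
    [InnerProductSpace ℝ E] {Q : QuadraticForm ℝ E} (hQ : ∀ v, Q v = ‖v‖ ^ 2) {v w : E}
    (h : inner ℝ v w = 0) : Q.IsOrtho v w := by
  rw [QuadraticMap.isOrtho_def, hQ, hQ, hQ, norm_add_sq_real, h, mul_zero, add_zero]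

theorem stmt18_general {V : Type*} [NormedAddCommGroup V] [InnerProductSpace ℝ V]
    (Q : QuadraticForm ℝ V) (hQ : ∀ v : V, Q v = ‖v‖ ^ 2)
    (r : ℕ) (a b : Fin r → V)
    (horth : ∀ k l : Fin r, k ≠ l →
      (inner ℝ (a k) (a l) : ℝ) = 0 ∧ (inner ℝ (a k) (b l) : ℝ) = 0 ∧
        (inner ℝ (b k) (b l) : ℝ) = 0)
    (j : Fin r) (hj : (inner ℝ (a j) (b j) : ℝ) = 0) :
    scalarPart Q
        ((List.ofFn fun k => CliffordAlgebra.ι Q (a k)).prod *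
          (List.ofFn fun k => CliffordAlgebra.ι Q (b k)).reverse.prod) = 0 := by
  set S := Algebra.adjoin ℝ (ι Q '' {w | Q.IsOrtho (a j) w})
  have ι_mem_S {w : V} (h : inner ℝ (a j) w = 0) : ι Q w ∈ S :=
    Algebra.subset_adjoin ⟨w, QuadraticMap.isOrtho_of_inner_eq_zero hQ h, rfl⟩
  have ha (i : Fin r) (hi : i ≠ j) : ι Q (a i) ∈ S := ι_mem_S (horth j i hi.symm).1
  have hb (l : Fin r) : ι Q (b l) ∈ S := by
    rcases eq_or_ne l j with rfl | hl
    exacts [ι_mem_S hj, ι_mem_S (horth j l hl.symm).2.1]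
  obtain ⟨x, hx, y, hy, hA⟩ := exists_prod_ofFn_eq_mul_mul (S := S) _ j ha
  have hB : (List.ofFn fun k => ι Q (b k)).reverse.prod ∈ S := list_prod_mem fun z hz => by
    obtain ⟨l, rfl⟩ := List.mem_ofFn.mp (List.mem_reverse.mp hz)
    exact hb l
  rw [hA, mul_assoc _ y]
  exact scalarPart_mul_ι_mul (fun _ => id) hx (mul_mem hy hB)

theorem stmt18 {V : Type*} [NormedAddCommGroup V] [InnerProductSpace ℝ V]
    (Q : QuadraticForm ℝ V) (hQ : ∀ v : V, Q v = ‖v‖ ^ 2)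
    (r : ℕ) (a b : Fin r → V)
    (horth : ∀ k l : Fin r, k ≠ l →
      (inner ℝ (a k) (a l) : ℝ) = 0 ∧ (inner ℝ (a k) (b l) : ℝ) = 0 ∧
        (inner ℝ (b k) (b l) : ℝ) = 0)
    (hunit : ∀ k : Fin r, ‖a k‖ = 1 ∧ ‖b k‖ = 1)
    (j : Fin r) (hj : (inner ℝ (a j) (b j) : ℝ) = 0) :
    scalarPart Q
        ((List.ofFn fun k => CliffordAlgebra.ι Q (a k)).prod *
          (List.ofFn fun k => CliffordAlgebra.ι Q (b k)).reverse.prod) = 0 :=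
  stmt18_general Q hQ r a b horth j hj
end
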